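/- arXiv:1405.5194 — 3 statements merged into one kernel-verified Lean document; each statement's English description precedes it below -/
import Mathlib

section
/- Let X be a connected simplicial complex and let X1, X2, X3 be pairwise intersecting geodesically convex subcomplexes. Then there exist vertices A ∈ X1 ∩ X2, B ∈ X1 ∩ X3, C ∈ X2 ∩ X3 and geodesics γ1 ⊆ X1 from A to B, γ2 ⊆ X2 from A to C, γ3 ⊆ X3 from B to C such that either γ1 ∩ γ2 ∩ γ3 is nonempty, or the concatenation γ1 * γ3 * γ2 is an embedded cycle (isomorphic to a triangulation of S^1). -/
open Finset

noncomputable section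
open scoped Classical

/-- An abstract simplicial complex on vertex type `V`, given by its set of
(nonempty, finite) faces, closed under passing to nonempty subsets. -/
structure SComplex (V : Type) [DecidableEq V] where
  faces : Set (Finset V)
  not_empty_mem : ∅ ∉ faces
  down_closed : ∀ s ∈ faces, ∀ t ⊆ s, t.Nonempty → t ∈ faces

namespace SComplex

variable {V : Type} [DecidableEq V] (K : SComplex V)

/-- The 1-skeleton of a simplicial complex, as a simple graph. -/
def graph : SimpleGraph V where
  Adj a b := a ≠ b ∧ ({a, b} : Finset V) ∈ K.faces
  symm := by
    constructor
    intro a b h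
    refine ⟨h.1.symm, ?_⟩
    rw [Finset.pair_comm]
    exact h.2
  loopless := by
    constructor
    intro a h
    exact h.1 rfl

/-- A flag complex: every finite set of pairwise adjacent vertices spans a simplex. -/
def Flag : Prop :=
  ∀ s : Finset V, s.Nonempty → (∀ a ∈ s, ∀ b ∈ s, a ≠ b → K.graph.Adj a b) → s ∈ K.faces

/-- An embedded cycle of length `n` in the 1-skeleton, given by an injective map
from `ZMod n` with consecutive vertices adjacent. -/
def IsCycle (n : ℕ) (f : ZMod n → V) : Prop :=
  Function.Injective f ∧ ∀ i : ZMod n, K.graph.Adj (f i) (f (i + 1))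

/-- The cycle `f` has a diagonal: an edge joining two nonconsecutive vertices. -/
def HasDiagonal (n : ℕ) (f : ZMod n → V) : Prop :=
  ∃ i j : ZMod n, j ≠ i ∧ j ≠ i + 1 ∧ j ≠ i - 1 ∧ K.graph.Adj (f i) (f j)

/-- `k`-largeness: flag, and every embedded cycle of length `3 < n < k` has a diagonal. -/
def Large (k : ℕ) : Prop :=
  K.Flag ∧ ∀ n : ℕ, 3 < n → n < k → ∀ f : ZMod n → V, K.IsCycle n f → K.HasDiagonal n f

/-- The link of a simplex `σ`. -/
def link (σ : Finset V) : SComplex V where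
  faces := {t | t.Nonempty ∧ Disjoint t σ ∧ t ∪ σ ∈ K.faces}
  not_empty_mem := by
    rintro ⟨h, -, -⟩
    simp at h
  down_closed := by
    rintro s ⟨-, hd, hu⟩ t hts htne
    refine ⟨htne, hd.mono_left ?_, K.down_closed _ hu _ (Finset.union_subset_union hts Finset.Subset.rfl) ?_⟩
    · exact Finset.le_iff_subset.2 hts
    · obtain ⟨x, hx⟩ := htne
      exact ⟨x, Finset.mem_union_left _ hx⟩

/-- Local `k`-largeness: the link of every simplex is `k`-large. -/
def LocallyLarge (k : ℕ) : Prop :=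
  ∀ σ ∈ K.faces, (K.link σ).Large k

/-- A (full) geodesically convex subcomplex, specified by its vertex set:
it contains every geodesic of the 1-skeleton between any two of its vertices. -/
def ConvexSub (A : Set V) : Prop :=
  (∀ v ∈ A, ({v} : Finset V) ∈ K.faces) ∧
  ∀ x ∈ A, ∀ y ∈ A, ∀ p : K.graph.Walk x y, p.length = K.graph.dist x y →
    ∀ v ∈ p.support, v ∈ A

/-- A `3`-convex subcomplex: full (each vertex is a vertex of `K`), and containing the
middle vertex of every geodesic of length 2 with both endpoints in it. -/
def ThreeConvex (A : Set V) : Prop :=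
  (∀ v ∈ A, ({v} : Finset V) ∈ K.faces) ∧
  ∀ x ∈ A, ∀ z ∈ A, ∀ u : V, K.graph.Adj x u → K.graph.Adj u z →
    K.graph.dist x z = 2 → u ∈ A

end SComplex

/-- A combinatorial 2-dimensional surface-like complex: a finite set of triangles
(3-element vertex sets), every edge lying in at most two triangles. -/
structure CombSurface (W : Type) [DecidableEq W] where
  triangles : Finset (Finset W)
  card_eq : ∀ t ∈ triangles, t.card = 3
  edge_le_two : ∀ e : Finset W, e.card = 2 → (triangles.filter fun t => e ⊆ t).card ≤ 2

namespace CombSurface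

variable {W : Type} [DecidableEq W] (D : CombSurface W)

/-- Vertices of the surface. -/
def verts : Finset W := D.triangles.biUnion id

/-- Edges of the surface (2-element subsets of triangles). -/
def edges : Finset (Finset W) := D.triangles.biUnion fun t => Finset.powersetCard 2 t

/-- 1-skeleton of the surface. -/
def graph : SimpleGraph W where
  Adj a b := a ≠ b ∧ ∃ t ∈ D.triangles, a ∈ t ∧ b ∈ t
  symm := by
    constructor
    rintro a b ⟨h1, t, ht, ha, hb⟩
    exact ⟨h1.symm, t, ht, hb, ha⟩
  loopless := by
    constructor
    rintro a ⟨h, -⟩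
    exact h rfl

/-- The number of triangles containing a vertex. -/
def numTri (v : W) : ℕ := (D.triangles.filter fun t => v ∈ t).card

/-- A boundary edge: an edge contained in exactly one triangle. -/
def BoundaryEdge (e : Finset W) : Prop :=
  e.card = 2 ∧ (D.triangles.filter fun t => e ⊆ t).card = 1

/-- A boundary vertex: a vertex lying on a boundary edge. -/
def IsBoundary (v : W) : Prop := ∃ e : Finset W, D.BoundaryEdge e ∧ v ∈ e

/-- The defect of a vertex: `3 - numTri` for boundary vertices, `6 - numTri` for
interior vertices. -/
def defect (v : W) : ℤ :=
  (if D.IsBoundary v then 3 else 6) - (D.numTri v : ℤ)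

/-- Euler characteristic `V - E + F`. -/
def euler : ℤ := (D.verts.card : ℤ) - (D.edges.card : ℤ) + (D.triangles.card : ℤ)

/-- The link graph at a vertex `v`: two vertices are adjacent iff they span a
triangle together with `v`. -/
def linkGraph (v : W) : SimpleGraph W where
  Adj a b := a ≠ b ∧ ({v, a, b} : Finset W) ∈ D.triangles
  symm := by
    constructor
    rintro a b ⟨h1, h2⟩
    refine ⟨h1.symm, ?_⟩
    rwa [Finset.pair_comm]
  loopless := by
    constructor
    rintro a ⟨h, -⟩
    exact h rfl

/-- The manifold condition: the link of every vertex is connected (together with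
`edge_le_two` this makes every vertex link a path or a cycle). -/
def IsManifold : Prop :=
  ∀ v a b : W, D.graph.Adj v a → D.graph.Adj v b → (D.linkGraph v).Reachable a b

/-- The 1-skeleton is connected on the vertices of the surface. -/
def Conn : Prop := ∀ a ∈ D.verts, ∀ b ∈ D.verts, D.graph.Reachable a b

/-- A combinatorial disc: a connected combinatorial surface with Euler
characteristic 1 and nonempty boundary. -/
def IsDisc : Prop :=
  D.IsManifold ∧ D.Conn ∧ D.euler = 1 ∧ ∃ e : Finset W, D.BoundaryEdge e

/-- An enumeration of the boundary of the surface as a cycle. -/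
def BCycle (n : ℕ) (g : ZMod n → W) : Prop :=
  Function.Injective g ∧ (∀ i : ZMod n, D.BoundaryEdge {g i, g (i + 1)}) ∧
    ∀ v ∈ D.verts, D.IsBoundary v → ∃ i : ZMod n, g i = v

end CombSurface

/-- The area of a simplicial map on a surface: the number of triangles on which
it is injective. -/
def areaOf {W : Type} [DecidableEq W] {V : Type} [DecidableEq V]
    (D : CombSurface W) (φ : W → V) : ℕ :=
  (D.triangles.filter fun t => (t.image φ).card = 3).card

namespace SComplex

variable {V : Type} [DecidableEq V] (K : SComplex V)

/-- A simplicial map from a combinatorial surface to the complex. -/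
def IsSurfaceMap {W : Type} [DecidableEq W] (D : CombSurface W) (φ : W → V) : Prop :=
  ∀ t ∈ D.triangles, t.image φ ∈ K.faces

/-- The surface `(D, φ)` spans the cycle `f`: it is a simplicial map from a disc
whose boundary is mapped isomorphically onto `f`. -/
def Spans {W : Type} [DecidableEq W] (D : CombSurface W) (φ : W → V)
    {n : ℕ} (f : ZMod n → V) : Prop :=
  K.IsSurfaceMap D φ ∧ D.IsDisc ∧ ∃ g : ZMod n → W, D.BCycle n g ∧ ∀ i, φ (g i) = f i

/-- `(D, φ)` is a minimal surface spanning the cycle `f`. -/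
def MinSpans (D : CombSurface ℕ) (φ : ℕ → V) {n : ℕ} (f : ZMod n → V) : Prop :=
  K.Spans D φ f ∧
    ∀ (D' : CombSurface ℕ) (φ' : ℕ → V), K.Spans D' φ' f → areaOf D φ ≤ areaOf D' φ'

/-- Simple connectivity: every embedded cycle is spanned by a disc surface. -/
def SimplyConnected : Prop :=
  ∀ n : ℕ, 3 ≤ n → ∀ f : ZMod n → V, K.IsCycle n f →
    ∃ (D : CombSurface ℕ) (φ : ℕ → V), K.Spans D φ f

/-- `k`-systolic: connected, simply connected and locally `k`-large. -/
def Systolic (k : ℕ) : Prop :=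
  K.graph.Connected ∧ K.SimplyConnected ∧ K.LocallyLarge k

end SComplex

/-- The equilateral triangulation of the Euclidean plane: the triangular lattice
on `ℤ × ℤ` (1-skeleton). -/
def TriLattice : SimpleGraph (ℤ × ℤ) where
  Adj p q := p ≠ q ∧
    (p.1 - q.1) ^ 2 + (p.1 - q.1) * (p.2 - q.2) + (p.2 - q.2) ^ 2 = 1
  symm := by
    constructor
    rintro p q ⟨h1, h2⟩
    refine ⟨h1.symm, ?_⟩
    ring_nf
    ring_nf at h2
    linarith
  loopless := by
    constructor
    rintro p ⟨h, -⟩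
    exact h rfl

/-! Choose the three corners `A ∈ X₁ ∩ X₂`, `B ∈ X₁ ∩ X₃`, `C ∈ X₂ ∩ X₃` so that the perimeter
`d(A,B) + d(B,C) + d(C,A)` is minimal, and join them by geodesic paths, which lie in the
respective convex subcomplexes. A vertex `v ≠ A` common to the two sides at `A` lies in
`X₁ ∩ X₂` and would be a corner with perimeter smaller by `2 d(A,v)`; so two sides meet only
at their common corner, and unless all three share a vertex they close up to an embedded cycle. -/

namespace SimpleGraph

variable {V : Type} {G : SimpleGraph V}

def perimeter (G : SimpleGraph V) (a b c : V) : ℕ := G.dist a b + G.dist b c + G.dist c a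

theorem perimeter_swap (a b c : V) : G.perimeter a b c = G.perimeter b a c := by
  simp only [perimeter]
  rw [dist_comm (u := b) (v := a), dist_comm (u := a) (v := c), dist_comm (u := c) (v := b)]
  omega

theorem perimeter_rotate (a b c : V) : G.perimeter a b c = G.perimeter b c a := by
  simp only [perimeter]
  omega

theorem exists_perimeter_le (s₁ s₂ s₃ : Set V) (h₁ : s₁.Nonempty) (h₂ : s₂.Nonempty)
    (h₃ : s₃.Nonempty) :
    ∃ a ∈ s₁, ∃ b ∈ s₂, ∃ c ∈ s₃,
      ∀ a' ∈ s₁, ∀ b' ∈ s₂, ∀ c' ∈ s₃, G.perimeter a b c ≤ G.perimeter a' b' c' := by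
  let f : V × V × V → ℕ := fun t ↦ G.perimeter t.1 t.2.1 t.2.2
  have hne : (s₁ ×ˢ s₂ ×ˢ s₃).Nonempty := h₁.prod (h₂.prod h₃)
  obtain ⟨ha, hb, hc⟩ := Function.argminOn_mem f _ hne
  exact ⟨_, ha, _, hb, _, hc, fun a' ha' b' hb' c' hc' ↦
    Function.argminOn_le f _ (show (a', b', c') ∈ s₁ ×ˢ s₂ ×ˢ s₃ from ⟨ha', hb', hc'⟩)⟩

namespace Walk

theorem dist_add_dist_of_length_eq_dist {u v w : V} {p : G.Walk u v}
    (hp : p.length = G.dist u v) (hw : w ∈ p.support) :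
    G.dist u w + G.dist w v = G.dist u v := by
  classical
  rw [← length_eq_dist_of_subwalk hp (p.isSubwalk_takeUntil hw),
    ← length_eq_dist_of_subwalk hp (p.isSubwalk_dropUntil hw), ← length_append,
    take_spec, hp]

theorem length_reverse_eq_dist {u v : V} {p : G.Walk u v} (hp : p.length = G.dist u v) :
    p.reverse.length = G.dist v u := by
  rw [length_reverse, hp, dist_comm]

theorem eq_of_mem_support_of_perimeter_le {a b c v : V} {p : G.Walk a b} {q : G.Walk a c}
    (hp : p.length = G.dist a b) (hq : q.length = G.dist a c) (hvp : v ∈ p.support)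
    (hvq : v ∈ q.support) (hle : G.perimeter a b c ≤ G.perimeter v b c) : v = a := by
  have hab := dist_add_dist_of_length_eq_dist hp hvp
  have hac := dist_add_dist_of_length_eq_dist hq hvq
  have hav : G.dist a v = 0 := by
    simp only [perimeter, dist_comm (u := c)] at hle
    omega
  exact (((p.takeUntil v hvp).reachable.dist_eq_zero_iff).mp hav).symm

theorem IsPath.start_notMem_support_tail {u v : V} {p : G.Walk u v} (hp : p.IsPath) :
    u ∉ p.support.tail := by
  have hnodup := hp.support_nodup
  rw [← p.cons_tail_support, List.nodup_cons] at hnodup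
  exact hnodup.1

theorem IsPath.append {u v w : V} {p : G.Walk u v} {q : G.Walk v w} (hp : p.IsPath)
    (hq : q.IsPath) (hpq : ∀ x ∈ p.support, x ∈ q.support → x = v) : (p.append q).IsPath := by
  rw [isPath_def, support_append, List.nodup_append]
  refine ⟨hp.support_nodup, hq.support_nodup.sublist (List.tail_sublist _),
    fun x hxp y hyq hxy ↦ ?_⟩
  subst hxy
  exact hq.start_notMem_support_tail (hpq x hxp (List.mem_of_mem_tail hyq) ▸ hyq)

theorem IsPath.isCycle_append_append_reverse {a b c : V} {p : G.Walk a b} {q : G.Walk b c}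
    {r : G.Walk a c} (hp : p.IsPath) (hq : q.IsPath) (hr : r.IsPath) (hab : a ≠ b)
    (hpq : ∀ v ∈ p.support, v ∈ q.support → v = b)
    (hpr : ∀ v ∈ p.support, v ∈ r.support → v = a)
    (hqr : ∀ v ∈ q.support, v ∈ r.support → v = c) :
    ((p.append q).append r.reverse).IsCycle := by
  have hbc : b ≠ c := fun h ↦ hab (hpr b p.end_mem_support (h ▸ r.end_mem_support)).symm
  have hr_tail : ∀ x ∈ r.reverse.support.tail, x ∈ r.support := fun x hx ↦ by
    simpa only [support_reverse, List.mem_reverse] using List.mem_of_mem_tail hx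
  refine (hp.append hq hpq).isCycle_append hr.reverse ?_ (.inl ?_)
  · rw [tail_support_append, List.disjoint_append_left]
    refine ⟨fun x hxp hxr ↦ ?_, fun x hxq hxr ↦ ?_⟩
    · exact hp.start_notMem_support_tail (hpr x (List.mem_of_mem_tail hxp) (hr_tail x hxr) ▸ hxp)
    · exact hr.reverse.start_notMem_support_tail
        (hqr x (List.mem_of_mem_tail hxq) (hr_tail x hxr) ▸ hxr)
  · have hp_pos := not_nil_iff_lt_length.mp (not_nil_of_ne (p := p) hab)
    have hq_pos := not_nil_iff_lt_length.mp (not_nil_of_ne (p := q) hbc)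
    rw [length_append]
    omega

end Walk

end SimpleGraph

/-- in a connected complex with three pairwise intersecting
geodesically convex subcomplexes one can choose points in the pairwise
intersections and geodesics between them inside the respective subcomplexes so
that either all three geodesics share a vertex or their concatenation is an
embedded cycle. -/
theorem stmt6_choose_geodesic_triangle {V : Type} [DecidableEq V] (K : SComplex V)
    (hconn : K.graph.Connected) (A1 A2 A3 : Set V)
    (h1 : K.ConvexSub A1) (h2 : K.ConvexSub A2) (h3 : K.ConvexSub A3)
    (h12 : (A1 ∩ A2).Nonempty) (h13 : (A1 ∩ A3).Nonempty) (h23 : (A2 ∩ A3).Nonempty) :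
    ∃ (A B C : V), A ∈ A1 ∩ A2 ∧ B ∈ A1 ∩ A3 ∧ C ∈ A2 ∩ A3 ∧
      ∃ (γ1 : K.graph.Walk A B) (γ3 : K.graph.Walk B C) (γ2 : K.graph.Walk A C),
        γ1.length = K.graph.dist A B ∧ γ3.length = K.graph.dist B C ∧
        γ2.length = K.graph.dist A C ∧
        (∀ v ∈ γ1.support, v ∈ A1) ∧ (∀ v ∈ γ2.support, v ∈ A2) ∧
        (∀ v ∈ γ3.support, v ∈ A3) ∧
        ((∃ v : V, v ∈ γ1.support ∧ v ∈ γ2.support ∧ v ∈ γ3.support) ∨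
          ((γ1.append γ3).append γ2.reverse).IsCycle) := by
  open SimpleGraph Walk in
  obtain ⟨A, hA, B, hB, C, hC, hmin⟩ := exists_perimeter_le (G := K.graph) _ _ _ h12 h13 h23
  obtain ⟨γ1, hγ1, hγ1len⟩ := hconn.exists_path_of_dist A B
  obtain ⟨γ2, hγ2, hγ2len⟩ := hconn.exists_path_of_dist A C
  obtain ⟨γ3, hγ3, hγ3len⟩ := hconn.exists_path_of_dist B C
  have hs1 : ∀ v ∈ γ1.support, v ∈ A1 := h1.2 A hA.1 B hB.1 γ1 hγ1len
  have hs2 : ∀ v ∈ γ2.support, v ∈ A2 := h2.2 A hA.2 C hC.1 γ2 hγ2len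
  have hs3 : ∀ v ∈ γ3.support, v ∈ A3 := h3.2 B hB.2 C hC.2 γ3 hγ3len
  refine ⟨A, B, C, hA, hB, hC, γ1, γ3, γ2, hγ1len, hγ3len, hγ2len, hs1, hs2, hs3, ?_⟩
  by_cases hcommon : ∃ v, v ∈ γ1.support ∧ v ∈ γ2.support ∧ v ∈ γ3.support
  · exact .inl hcommon
  refine .inr (hγ1.isCycle_append_append_reverse hγ3 hγ2 ?_ ?_ ?_ ?_)
  · rintro rfl
    exact hcommon ⟨A, γ1.start_mem_support, γ2.start_mem_support, γ3.start_mem_support⟩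
  · intro v hv1 hv3
    refine eq_of_mem_support_of_perimeter_le (length_reverse_eq_dist hγ1len) hγ3len
      (by simpa using hv1) hv3 ?_
    rw [perimeter_swap B, perimeter_swap v]
    exact hmin A hA v ⟨hs1 v hv1, hs3 v hv3⟩ C hC
  · intro v hv1 hv2
    exact eq_of_mem_support_of_perimeter_le hγ1len hγ2len hv1 hv2
      (hmin v ⟨hs1 v hv1, hs2 v hv2⟩ B hB C hC)
  · intro v hv3 hv2
    refine eq_of_mem_support_of_perimeter_le (length_reverse_eq_dist hγ2len)
      (length_reverse_eq_dist hγ3len) (by simpa using hv2) (by simpa using hv3) ?_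
    rw [perimeter_rotate C, perimeter_rotate v]
    exact hmin A hA B hB v ⟨hs2 v hv2, hs3 v hv3⟩

end
end

section
/- Let Δ be a simplicial disc whose boundary consists of two geodesics (of its 1-skeleton) between vertices x and y meeting only at x and y, and suppose every interior vertex of Δ has defect ≤ 0. Then on each of the two boundary geodesics, between any two vertices of positive defect there is a vertex of negative defect; consequently the total defect along each open boundary geodesic (excluding x and y) is at most 1. -/
open Finset

noncomputable section
open scoped Classical

/-!
Let `p` be a geodesic of the 1-skeleton all of whose edges are boundary edges; write `p m` for
its `m`-th vertex and `z k` for the apex of the unique triangle on its `k`-th edge. At an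
interior vertex `v = p m` the link of `v` is connected, so it contains a path from `p (m-1)` to
`p (m+1)`. These two vertices are at distance 2, so the path has length at least 2, its inner
vertices run from `z (m-1)` to `z m`, and its edges give distinct triangles at `v`. Hence
`z (m-1)` and `z m` are joined by a walk of length at most `numTri v - 2 = 1 - defect v`.
Chaining these walks joins `p a` to `p b` by a walk of length at most `2 + ∑ (1 - defect)` over
the vertices strictly between, and comparing with `dist (p a) (p b) = b - a` shows that this
defect sum is at most 1. Two positive defects with no negative one in between would make it at
least 2.
-/

namespace SimpleGraph.Walk

variable {V : Type*} {G : SimpleGraph V} {u v : V}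

lemma exists_isSubwalk_getVert_getVert (p : G.Walk u v) {a b : ℕ} (hab : a ≤ b)
    (hb : b ≤ p.length) :
    ∃ q : G.Walk (p.getVert a) (p.getVert b), q.IsSubwalk p ∧ q.length = b - a := by
  have hend : (p.drop a).getVert (b - a) = p.getVert b := by
    rw [drop_getVert, Nat.add_sub_cancel' hab]
  refine ⟨((p.drop a).take (b - a)).copy rfl hend, ?_, ?_⟩
  · simpa using (((p.drop a).isSubwalk_take (b - a)).trans (p.isSubwalk_drop a)).copy
      rfl hend rfl rfl
  · simp only [length_copy, take_length, drop_length]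
    omega

lemma dist_getVert_getVert {p : G.Walk u v} (hp : p.length = G.dist u v) {a b : ℕ}
    (hab : a ≤ b) (hb : b ≤ p.length) : G.dist (p.getVert a) (p.getVert b) = b - a := by
  obtain ⟨q, hq, hlen⟩ := p.exists_isSubwalk_getVert_getVert hab hb
  exact hlen ▸ (length_eq_dist_of_subwalk hp hq).symm

end SimpleGraph.Walk

namespace CombSurface

open SimpleGraph

variable {W : Type} [DecidableEq W] {D : CombSurface W}

variable (D) in
def IsBoundaryWalk {x y : W} (p : D.graph.Walk x y) : Prop :=
  ∀ i < p.length, D.BoundaryEdge {p.getVert i, p.getVert (i + 1)}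

lemma ne_of_mem_triangles {a b c : W} (h : {a, b, c} ∈ D.triangles) :
    a ≠ b ∧ a ≠ c ∧ b ≠ c := by
  have h3 := D.card_eq _ h
  refine ⟨?_, ?_, ?_⟩ <;> rintro rfl <;>
    simp only [Finset.mem_insert, Finset.mem_singleton, true_or, or_true,
      Finset.insert_eq_of_mem] at h3 <;>
    exact (Finset.card_le_two.trans_lt (by norm_num)).ne h3

lemma BoundaryEdge.exists_mem_triangles {a b : W} (he : D.BoundaryEdge {a, b}) :
    ∃ z, {a, b, z} ∈ D.triangles := by
  obtain ⟨t, ht⟩ := Finset.card_eq_one.mp he.2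
  obtain ⟨htri, hsub⟩ := Finset.mem_filter.mp (ht ▸ Finset.mem_singleton_self t)
  obtain ⟨z, hz⟩ : ∃ z, t \ {a, b} = {z} := by
    rw [← Finset.card_eq_one, Finset.card_sdiff_of_subset hsub, D.card_eq t htri, he.1]
  refine ⟨z, ?_⟩
  rwa [← Finset.union_sdiff_of_subset hsub, hz, Finset.insert_union,
    Finset.singleton_union] at htri

lemma BoundaryEdge.eq_of_mem_triangles {a b z z' : W} (he : D.BoundaryEdge {a, b})
    (hz : {a, b, z} ∈ D.triangles) (hz' : {a, b, z'} ∈ D.triangles) : z = z' := by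
  obtain ⟨t, ht⟩ := Finset.card_eq_one.mp he.2
  have hunique : ∀ s ∈ D.triangles, {a, b} ⊆ s → s = t := fun s hs hsub =>
    Finset.mem_singleton.mp (ht ▸ Finset.mem_filter.mpr ⟨hs, hsub⟩)
  have heq : ({a, b, z} : Finset W) = {a, b, z'} :=
    (hunique _ hz (by simp [Finset.insert_subset_iff])).trans
      (hunique _ hz' (by simp [Finset.insert_subset_iff])).symm
  obtain ⟨-, haz', hbz'⟩ := ne_of_mem_triangles hz'
  have hmem : z' ∈ ({a, b, z} : Finset W) := heq ▸ by simp
  simp only [Finset.mem_insert, Finset.mem_singleton] at hmem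
  tauto

lemma linkGraph_le_graph (v : W) : D.linkGraph v ≤ D.graph :=
  fun _ _ ⟨hab, ht⟩ => ⟨hab, _, ht, by simp, by simp⟩

lemma IsManifold.linkGraph_reachable (hman : D.IsManifold) {v a b za zb : W}
    (ha : {a, v, za} ∈ D.triangles) (hb : {v, b, zb} ∈ D.triangles) :
    (D.linkGraph v).Reachable a b :=
  hman v a b ⟨(ne_of_mem_triangles ha).1.symm, _, ha, by simp, by simp⟩
    ⟨(ne_of_mem_triangles hb).1, _, hb, by simp, by simp⟩

lemma length_le_numTri_of_isTrail {v a b : W} {q : (D.linkGraph v).Walk a b}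
    (hq : q.IsTrail) : q.length ≤ D.numTri v := by
  have hedge : ∀ e ∈ q.edges, v ∉ e ∧ insert v e.toFinset ∈ D.triangles := by
    intro e he
    induction e with
    | h α β =>
      obtain ⟨-, ht⟩ := q.adj_of_mem_edges he
      obtain ⟨hvα, hvβ, -⟩ := ne_of_mem_triangles ht
      exact ⟨by simp [hvα, hvβ], by rwa [Sym2.toFinset_mk_eq]⟩
  rw [← q.length_edges, ← List.toFinset_card_of_nodup hq.edges_nodup]
  refine Finset.card_le_card_of_injOn (fun e => insert v e.toFinset) (fun e he => ?_)
    (fun e₁ he₁ e₂ he₂ h => ?_)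
  · exact Finset.mem_filter.mpr
      ⟨(hedge e (List.mem_toFinset.mp he)).2, Finset.mem_insert_self _ _⟩
  · have hv₁ := (hedge e₁ (List.mem_toFinset.mp he₁)).1
    have hv₂ := (hedge e₂ (List.mem_toFinset.mp he₂)).1
    have hfin : e₁.toFinset = e₂.toFinset := by
      rw [← Finset.erase_insert (a := v) (s := e₁.toFinset) (by simpa using hv₁),
        ← Finset.erase_insert (a := v) (s := e₂.toFinset) (by simpa using hv₂)]
      exact congrArg (Finset.erase · v) h
    exact Sym2.ext fun w => by rw [← Sym2.mem_toFinset, hfin, Sym2.mem_toFinset]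

lemma IsManifold.exists_walk_apex_apex (hman : D.IsManifold) {a v c za zc : W}
    (hav : D.BoundaryEdge {a, v}) (hvc : D.BoundaryEdge {v, c})
    (hza : {a, v, za} ∈ D.triangles) (hzc : {v, c, zc} ∈ D.triangles)
    (hac : a ≠ c) (hnadj : ¬D.graph.Adj a c) :
    ∃ w : D.graph.Walk za zc, w.length + 2 ≤ D.numTri v := by
  obtain ⟨q, hq⟩ : ∃ q : (D.linkGraph v).Walk a c, q.IsPath :=
    let ⟨q⟩ := hman.linkGraph_reachable hza hzc
    ⟨q.bypass, q.bypass_isPath⟩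
  have hlen : 2 ≤ q.length := by
    by_contra! h
    interval_cases hl : q.length
    · exact hac (Walk.eq_of_length_eq_zero hl)
    · exact hnadj (linkGraph_le_graph v (Walk.exists_length_eq_one_iff.mp ⟨q, hl⟩))
  have hfirst : q.getVert 1 = za := by
    have hadj := q.adj_getVert_succ (i := 0) (by omega)
    rw [q.getVert_zero] at hadj
    exact hav.eq_of_mem_triangles (by rw [Finset.insert_comm]; exact hadj.2) hza
  have hlast : q.getVert (q.length - 1) = zc := by
    have hadj := q.adj_getVert_succ (i := q.length - 1) (by omega)
    rw [Nat.sub_add_cancel (by omega), q.getVert_length] at hadj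
    exact hvc.eq_of_mem_triangles (by rw [Finset.pair_comm]; exact hadj.2) hzc
  obtain ⟨s, -, hs⟩ := q.exists_isSubwalk_getVert_getVert (a := 1) (b := q.length - 1)
    (by omega) (by omega)
  refine ⟨(s.mapLe (linkGraph_le_graph v)).copy hfirst hlast, ?_⟩
  have := length_le_numTri_of_isTrail hq.isTrail
  simp only [Walk.length_copy, Walk.length_mapLe, hs]
  omega

section BoundaryGeodesic

variable {x y : W} {p : D.graph.Walk x y} {z : ℕ → W}

lemma IsBoundaryWalk.defect_getVert (hpb : D.IsBoundaryWalk p) {k : ℕ} (hk : k < p.length) :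
    D.defect (p.getVert k) = 3 - D.numTri (p.getVert k) := by
  rw [defect, if_pos ⟨_, hpb k hk, Finset.mem_insert_self _ _⟩]

lemma exists_walk_apex_succ (hman : D.IsManifold) (hp : p.length = D.graph.dist x y)
    (hpb : D.IsBoundaryWalk p)
    (hz : ∀ k < p.length, {p.getVert k, p.getVert (k + 1), z k} ∈ D.triangles)
    {m : ℕ} (hm : m + 1 < p.length) :
    ∃ w : D.graph.Walk (z m) (z (m + 1)), w.length + 2 ≤ D.numTri (p.getVert (m + 1)) := by
  have hdist : D.graph.dist (p.getVert m) (p.getVert (m + 1 + 1)) = 2 := by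
    rw [Walk.dist_getVert_getVert hp (by omega) (by omega)]
    omega
  refine hman.exists_walk_apex_apex (hpb m (by omega)) (hpb (m + 1) hm)
    (hz m (by omega)) (hz (m + 1) hm) (fun h => ?_) (fun h => ?_)
  · rw [h, SimpleGraph.dist_self] at hdist
    omega
  · rw [← dist_eq_one_iff_adj] at h
    omega

lemma exists_walk_getVert_apex (hman : D.IsManifold) (hp : p.length = D.graph.dist x y)
    (hpb : D.IsBoundaryWalk p)
    (hz : ∀ k < p.length, {p.getVert k, p.getVert (k + 1), z k} ∈ D.triangles)
    {a k : ℕ} (hak : a ≤ k) (hk : k < p.length) :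
    ∃ w : D.graph.Walk (p.getVert a) (z k),
      w.length + 2 * (k - a) ≤ 1 + ∑ m ∈ Finset.Ioc a k, D.numTri (p.getVert m) := by
  induction k, hak using Nat.le_induction with
  | base =>
    have hadj : D.graph.Adj (p.getVert a) (z a) :=
      ⟨(ne_of_mem_triangles (hz a hk)).2.1, _, hz a hk, by simp, by simp⟩
    exact ⟨.cons hadj .nil, by simp⟩
  | succ k hak ih =>
    obtain ⟨w, hw⟩ := ih (by omega)
    obtain ⟨w', hw'⟩ := exists_walk_apex_succ hman hp hpb hz hk
    refine ⟨w.append w', ?_⟩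
    rw [Walk.length_append, Finset.sum_Ioc_succ_top hak]
    omega

theorem sum_defect_Ioo_le_one (hman : D.IsManifold) (hp : p.length = D.graph.dist x y)
    (hpb : D.IsBoundaryWalk p) {a b : ℕ} (hb : b ≤ p.length) :
    ∑ m ∈ Finset.Ioo a b, D.defect (p.getVert m) ≤ 1 := by
  rcases le_or_gt b a with hba | hab
  · simp [Finset.Ioo_eq_empty_of_le hba]
  have : Nonempty W := ⟨x⟩
  choose! z hz using fun k (hk : k < p.length) => (hpb k hk).exists_mem_triangles
  obtain ⟨w, hw⟩ := exists_walk_getVert_apex hman hp hpb hz (a := a) (k := b - 1)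
    (by omega) (by omega)
  have hadj : D.graph.Adj (z (b - 1)) (p.getVert b) := by
    have ht := hz (b - 1) (by omega)
    rw [Nat.sub_add_cancel (by omega)] at ht
    exact ⟨(ne_of_mem_triangles ht).2.2.symm, _, ht, by simp, by simp⟩
  have hdist : b - a ≤ w.length + 1 := by
    rw [← Walk.dist_getVert_getVert hp hab.le hb, ← Walk.length_concat w hadj]
    exact dist_le _
  rw [Finset.Ioc_sub_one_right_eq_Ioo] at hw
  rw [Finset.sum_congr rfl fun m hm => hpb.defect_getVert (k := m)
    (by have := (Finset.mem_Ioo.mp hm).2; omega), Finset.sum_sub_distrib, Finset.sum_const,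
    Nat.card_Ioo, nsmul_eq_mul, ← Nat.cast_sum]
  omega

theorem exists_defect_neg_between (hman : D.IsManifold) (hp : p.length = D.graph.dist x y)
    (hpb : D.IsBoundaryWalk p) {i j : ℕ} (hi : 0 < i) (hij : i < j) (hj : j < p.length)
    (hdi : 0 < D.defect (p.getVert i)) (hdj : 0 < D.defect (p.getVert j)) :
    ∃ k, i < k ∧ k < j ∧ D.defect (p.getVert k) < 0 := by
  by_contra! hnonneg
  have hsum := sum_defect_Ioo_le_one hman hp hpb (a := i - 1) (b := j + 1) (by omega)
  have := Finset.add_le_sum (s := Finset.Ioo (i - 1) (j + 1))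
    (f := fun m => D.defect (p.getVert m)) (i := i) (j := j)
    (fun m hm => ?_) (Finset.mem_Ioo.mpr ⟨by omega, by omega⟩)
    (Finset.mem_Ioo.mpr ⟨by omega, by omega⟩) hij.ne
  · omega
  · obtain ⟨hm₁, hm₂⟩ := Finset.mem_Ioo.mp hm
    rcases eq_or_ne m i with rfl | hmi
    · exact hdi.le
    rcases eq_or_ne m j with rfl | hmj
    · exact hdj.le
    exact hnonneg m (by omega) (by omega)

end BoundaryGeodesic

end CombSurface

theorem stmt8_digon_boundary_defect_general {W : Type} [DecidableEq W]
    (D : CombSurface W) (hdisc : D.IsDisc) (x y : W) (p0 p1 : D.graph.Walk x y)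
    (hg0 : p0.length = D.graph.dist x y) (hg1 : p1.length = D.graph.dist x y)
    (hb0 : ∀ i < p0.length, D.BoundaryEdge {p0.getVert i, p0.getVert (i + 1)})
    (hb1 : ∀ i < p1.length, D.BoundaryEdge {p1.getVert i, p1.getVert (i + 1)}) :
    (∀ i j : ℕ, 0 < i → i < j → j < p0.length →
        0 < D.defect (p0.getVert i) → 0 < D.defect (p0.getVert j) →
        ∃ k : ℕ, i < k ∧ k < j ∧ D.defect (p0.getVert k) < 0) ∧
    (∀ i j : ℕ, 0 < i → i < j → j < p1.length →
        0 < D.defect (p1.getVert i) → 0 < D.defect (p1.getVert j) →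
        ∃ k : ℕ, i < k ∧ k < j ∧ D.defect (p1.getVert k) < 0) ∧
    (∑ i ∈ Finset.Ioo 0 p0.length, D.defect (p0.getVert i)) ≤ 1 ∧
    (∑ i ∈ Finset.Ioo 0 p1.length, D.defect (p1.getVert i)) ≤ 1 := by
  obtain ⟨hman, -⟩ := hdisc
  exact ⟨fun _ _ => CombSurface.exists_defect_neg_between hman hg0 hb0,
    fun _ _ => CombSurface.exists_defect_neg_between hman hg1 hb1,
    CombSurface.sum_defect_Ioo_le_one hman hg0 hb0 le_rfl,
    CombSurface.sum_defect_Ioo_le_one hman hg1 hb1 le_rfl⟩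

/-- on each of the two boundary geodesics of a digon, between any two
positive-defect vertices there is a negative one, and the total defect along each
open geodesic is at most 1. -/
theorem stmt8_digon_boundary_defect {W : Type} [DecidableEq W]
    (D : CombSurface W) (hdisc : D.IsDisc)
    (hsys : ∀ v ∈ D.verts, ¬D.IsBoundary v → D.defect v ≤ 0)
    (x y : W) (hx : x ∈ D.verts) (hy : y ∈ D.verts) (hxy : x ≠ y)
    (p0 p1 : D.graph.Walk x y)
    (hg0 : p0.length = D.graph.dist x y) (hg1 : p1.length = D.graph.dist x y)
    (hb0 : ∀ i < p0.length, D.BoundaryEdge {p0.getVert i, p0.getVert (i + 1)})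
    (hb1 : ∀ i < p1.length, D.BoundaryEdge {p1.getVert i, p1.getVert (i + 1)})
    (hmeet : ∀ v : W, v ∈ p0.support → v ∈ p1.support → v = x ∨ v = y)
    (hcover : ∀ v ∈ D.verts, D.IsBoundary v → v ∈ p0.support ∨ v ∈ p1.support) :
    (∀ i j : ℕ, 0 < i → i < j → j < p0.length →
        0 < D.defect (p0.getVert i) → 0 < D.defect (p0.getVert j) →
        ∃ k : ℕ, i < k ∧ k < j ∧ D.defect (p0.getVert k) < 0) ∧
    (∀ i j : ℕ, 0 < i → i < j → j < p1.length →
        0 < D.defect (p1.getVert i) → 0 < D.defect (p1.getVert j) →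
        ∃ k : ℕ, i < k ∧ k < j ∧ D.defect (p1.getVert k) < 0) ∧
    (∑ i ∈ Finset.Ioo 0 p0.length, D.defect (p0.getVert i)) ≤ 1 ∧
    (∑ i ∈ Finset.Ioo 0 p1.length, D.defect (p1.getVert i)) ≤ 1 :=
  stmt8_digon_boundary_defect_general D hdisc x y p0 p1 hg0 hg1 hb0 hb1
end
end

section
/- Let Δ be a simplicial disc all of whose interior vertices have defect ≤ 0 (a systolic disc), whose boundary is a geodesic triangle: three distinguished vertices of defect at most 2 and all other boundary vertices contained in at least 3 triangles (defect ≤ 0). Then Δ has no interior vertices with strictly negative defect, every interior vertex has defect exactly 0, and Δ is flat. -/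
open Finset

noncomputable section
open scoped Classical

/-!
Counting incidences gives `∑ defect = 6 χ + 3 (#boundary edges - #boundary vertices)` for
every such surface. The triangles at a vertex `v` cover each edge at `v` twice, except boundary
edges, which they cover once; so `v` lies on an even number of boundary edges, at least two if
`v` is on the boundary. Hence there are at least as many boundary edges as boundary vertices,
and a disc has total defect at least `6`. In the theorem the defects are bounded by `2` at the
three corners and by `0` elsewhere, bounds whose total is at most `6`, so every bound is
attained and no vertex has negative defect.
-/

namespace CombSurface

variable {W : Type} [DecidableEq W] (D : CombSurface W)

def bedges : Finset (Finset W) := D.edges.filter D.BoundaryEdge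

theorem mem_verts {v : W} : v ∈ D.verts ↔ ∃ t ∈ D.triangles, v ∈ t := by
  simp [verts]

theorem mem_edges {e : Finset W} :
    e ∈ D.edges ↔ ∃ t ∈ D.triangles, e ⊆ t ∧ e.card = 2 := by
  simp [edges]

theorem subset_verts {t : Finset W} (ht : t ∈ D.triangles) : t ⊆ D.verts :=
  fun _ hv => D.mem_verts.2 ⟨t, ht, hv⟩

theorem BoundaryEdge.mem_edges {D : CombSurface W} {e : Finset W} (he : D.BoundaryEdge e) :
    e ∈ D.edges := by
  obtain ⟨t, ht⟩ := Finset.card_pos.1 (he.2 ▸ Nat.one_pos)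
  rw [Finset.mem_filter] at ht
  exact D.mem_edges.2 ⟨t, ht.1, ht.2, he.1⟩

theorem IsBoundary.mem_verts {D : CombSurface W} {v : W} (hv : D.IsBoundary v) :
    v ∈ D.verts := by
  obtain ⟨e, he, hve⟩ := hv
  obtain ⟨t, ht, het, -⟩ := D.mem_edges.1 he.mem_edges
  exact D.subset_verts ht (het hve)

theorem filter_edges_subset {t : Finset W} (ht : t ∈ D.triangles) :
    D.edges.filter (· ⊆ t) = t.powersetCard 2 := by
  ext e
  simp only [Finset.mem_filter, Finset.mem_powersetCard, D.mem_edges]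
  exact ⟨fun ⟨⟨_, _, _, he⟩, het⟩ => ⟨het, he⟩,
    fun ⟨het, he⟩ => ⟨⟨t, ht, het, he⟩, het⟩⟩

theorem sum_numTri : ∑ v ∈ D.verts, D.numTri v = 3 * #D.triangles := by
  calc ∑ v ∈ D.verts, D.numTri v
      = ∑ t ∈ D.triangles, #(D.verts.filter (· ∈ t)) := by
        simp only [numTri, Finset.card_filter]; exact Finset.sum_comm
    _ = ∑ t ∈ D.triangles, 3 := Finset.sum_congr rfl fun t ht => by
        rw [Finset.filter_mem_eq_inter, Finset.inter_eq_right.2 (D.subset_verts ht),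
          D.card_eq t ht]
    _ = 3 * #D.triangles := by rw [Finset.sum_const, smul_eq_mul, mul_comm]

theorem sum_card_triangles_supset_edges :
    ∑ e ∈ D.edges, #(D.triangles.filter (e ⊆ ·)) = 3 * #D.triangles := by
  calc ∑ e ∈ D.edges, #(D.triangles.filter (e ⊆ ·))
      = ∑ t ∈ D.triangles, #(D.edges.filter (· ⊆ t)) := by
        simp only [Finset.card_filter]; exact Finset.sum_comm
    _ = ∑ t ∈ D.triangles, 3 := Finset.sum_congr rfl fun t ht => by
        rw [D.filter_edges_subset ht, Finset.card_powersetCard, D.card_eq t ht]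
        rfl
    _ = 3 * #D.triangles := by rw [Finset.sum_const, smul_eq_mul, mul_comm]

theorem sum_card_triangles_supset_edges_mem (v : W) :
    ∑ e ∈ D.edges.filter (v ∈ ·), #(D.triangles.filter (e ⊆ ·)) = 2 * D.numTri v := by
  calc ∑ e ∈ D.edges.filter (v ∈ ·), #(D.triangles.filter (e ⊆ ·))
      = ∑ t ∈ D.triangles, #((D.edges.filter (v ∈ ·)).filter (· ⊆ t)) := by
        simp only [Finset.card_filter]; exact Finset.sum_comm
    _ = ∑ t ∈ D.triangles, if v ∈ t then 2 else 0 := Finset.sum_congr rfl fun t ht => by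
        rw [Finset.filter_comm, D.filter_edges_subset ht]
        split_ifs with hvt
        · simp_rw [← Finset.singleton_subset_iff (a := v)]
          rw [Finset.card_filter_powersetCard_subset _ _ _ (by simpa) (by simp), D.card_eq t ht]
          rfl
        · exact Finset.card_eq_zero.2 (Finset.filter_eq_empty_iff.2
            fun e he hve => hvt ((Finset.mem_powersetCard.1 he).1 hve))
    _ = 2 * D.numTri v := by
        rw [← Finset.sum_filter, Finset.sum_const, smul_eq_mul, mul_comm]
        rfl

theorem sum_card_triangles_supset_add_card_filter_boundaryEdge {S : Finset (Finset W)}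
    (hS : S ⊆ D.edges) :
    ∑ e ∈ S, #(D.triangles.filter (e ⊆ ·)) + #(S.filter D.BoundaryEdge) = 2 * #S := by
  rw [Finset.card_filter, ← Finset.sum_add_distrib, mul_comm]
  refine Finset.sum_const_nat fun e he => ?_
  obtain ⟨t, ht, het, he2⟩ := D.mem_edges.1 (hS he)
  have hpos : 0 < #(D.triangles.filter (e ⊆ ·)) := Finset.card_pos.2 ⟨t, by simp [ht, het]⟩
  have hle := D.edge_le_two e he2
  by_cases hb : D.BoundaryEdge e
  · rw [if_pos hb, hb.2]
  · have : #(D.triangles.filter (e ⊆ ·)) ≠ 1 := fun h => hb ⟨he2, h⟩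
    rw [if_neg hb]
    omega

theorem two_mul_card_edges : 2 * #D.edges = 3 * #D.triangles + #D.bedges := by
  rw [← D.sum_card_triangles_supset_add_card_filter_boundaryEdge subset_rfl,
    D.sum_card_triangles_supset_edges, bedges]

theorem even_card_bedges_mem (v : W) : Even #(D.bedges.filter (v ∈ ·)) := by
  have h := D.sum_card_triangles_supset_add_card_filter_boundaryEdge
    (Finset.filter_subset (v ∈ ·) D.edges)
  rw [D.sum_card_triangles_supset_edges_mem, Finset.filter_comm] at h
  exact ⟨#(D.edges.filter (v ∈ ·)) - D.numTri v, by rw [bedges]; omega⟩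

theorem two_le_card_bedges_mem {v : W} (hv : D.IsBoundary v) :
    2 ≤ #(D.bedges.filter (v ∈ ·)) := by
  obtain ⟨e, he, hve⟩ := hv
  have hpos : 0 < #(D.bedges.filter (v ∈ ·)) :=
    Finset.card_pos.2 ⟨e, by simp [bedges, he, he.mem_edges, hve]⟩
  obtain ⟨k, hk⟩ := D.even_card_bedges_mem v
  omega

theorem card_filter_isBoundary_le_card_bedges : #(D.verts.filter D.IsBoundary) ≤ #D.bedges := by
  have hsum : ∑ v ∈ D.verts, #(D.bedges.filter (v ∈ ·)) = 2 * #D.bedges := by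
    calc ∑ v ∈ D.verts, #(D.bedges.filter (v ∈ ·))
        = ∑ e ∈ D.bedges, #(D.verts.filter (· ∈ e)) := by
          simp only [Finset.card_filter]; exact Finset.sum_comm
      _ = ∑ e ∈ D.bedges, 2 := Finset.sum_congr rfl fun e he => by
          obtain ⟨t, ht, het, he2⟩ := D.mem_edges.1 (Finset.mem_filter.1 he).1
          rw [Finset.filter_mem_eq_inter, Finset.inter_eq_right.2 (het.trans (D.subset_verts ht)),
            he2]
      _ = 2 * #D.bedges := by rw [Finset.sum_const, smul_eq_mul, mul_comm]
  have hle :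
      2 * #(D.verts.filter D.IsBoundary) ≤ ∑ v ∈ D.verts, #(D.bedges.filter (v ∈ ·)) := by
    calc 2 * #(D.verts.filter D.IsBoundary)
        = ∑ v ∈ D.verts.filter D.IsBoundary, 2 := by
          rw [Finset.sum_const, smul_eq_mul, mul_comm]
      _ ≤ ∑ v ∈ D.verts.filter D.IsBoundary, #(D.bedges.filter (v ∈ ·)) :=
          Finset.sum_le_sum fun v hv => D.two_le_card_bedges_mem (Finset.mem_filter.1 hv).2
      _ ≤ ∑ v ∈ D.verts, #(D.bedges.filter (v ∈ ·)) :=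
          Finset.sum_le_sum_of_subset (Finset.filter_subset _ _)
  omega

theorem sum_defect :
    ∑ v ∈ D.verts, D.defect v =
      6 * D.euler + 3 * ((#D.bedges : ℤ) - #(D.verts.filter D.IsBoundary)) := by
  have hite : ∑ v ∈ D.verts, (if D.IsBoundary v then (3 : ℤ) else 6) =
      3 * #(D.verts.filter D.IsBoundary) + 6 * #(D.verts.filter (¬D.IsBoundary ·)) := by
    rw [Finset.sum_ite, Finset.sum_const, Finset.sum_const, nsmul_eq_mul, nsmul_eq_mul, mul_comm,
      mul_comm (6 : ℤ)]
  have hverts : (#(D.verts.filter D.IsBoundary) : ℤ) + #(D.verts.filter (¬D.IsBoundary ·)) =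
      #D.verts := by exact_mod_cast Finset.card_filter_add_card_filter_not D.IsBoundary
  have hnumTri : ∑ v ∈ D.verts, (D.numTri v : ℤ) = 3 * #D.triangles := by
    exact_mod_cast D.sum_numTri
  have hedges : 2 * (#D.edges : ℤ) = 3 * #D.triangles + #D.bedges := by
    exact_mod_cast D.two_mul_card_edges
  simp only [defect, Finset.sum_sub_distrib, hite, hnumTri, euler]
  linarith

theorem six_le_sum_defect (h : D.euler = 1) : 6 ≤ ∑ v ∈ D.verts, D.defect v := by
  have := D.card_filter_isBoundary_le_card_bedges
  rw [sum_defect, h]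
  omega

theorem defect_eq_of_sum_le_six (h : D.euler = 1) {b : W → ℤ}
    (hle : ∀ v ∈ D.verts, D.defect v ≤ b v) (hb : ∑ v ∈ D.verts, b v ≤ 6) :
    ∀ v ∈ D.verts, D.defect v = b v :=
  (Finset.sum_eq_sum_iff_of_le hle).1
    (le_antisymm (Finset.sum_le_sum hle) (hb.trans (D.six_le_sum_defect h)))

end CombSurface

theorem stmt9_triangle_disc_flat_general {W : Type} [DecidableEq W]
    (D : CombSurface W) (hdisc : D.IsDisc)
    (hsys : ∀ v ∈ D.verts, ¬D.IsBoundary v → D.defect v ≤ 0)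
    (A B C : W)
    (hdA : D.defect A ≤ 2) (hdB : D.defect B ≤ 2) (hdC : D.defect C ≤ 2)
    (hbd : ∀ v ∈ D.verts, D.IsBoundary v → v ≠ A → v ≠ B → v ≠ C → 3 ≤ D.numTri v) :
    (∀ v ∈ D.verts, ¬D.IsBoundary v → D.defect v = 0) ∧
    (∀ v ∈ D.verts, D.IsBoundary v → -1 ≤ D.defect v) ∧
    (∀ (n : ℕ) (g : ZMod n → W), D.BCycle n g →
      ∀ (i : ZMod n) (m : ℕ), 0 < m → m < n →
        D.defect (g i) < 0 → D.defect (g (i + (m : ZMod n))) < 0 →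
        ∃ k : ℕ, 0 < k ∧ k < m ∧ 0 < D.defect (g (i + (k : ZMod n)))) := by
  obtain ⟨-, -, heuler, -⟩ := hdisc
  set corners : Finset W := {A, B, C}
  have hle : ∀ v ∈ D.verts, D.defect v ≤ if v ∈ corners then 2 else 0 := by
    intro v hv
    split_ifs with hc
    · simp only [corners, Finset.mem_insert, Finset.mem_singleton] at hc
      rcases hc with rfl | rfl | rfl <;> assumption
    · simp only [corners, Finset.mem_insert, Finset.mem_singleton, not_or] at hc
      by_cases hvb : D.IsBoundary v
      · have := hbd v hv hvb hc.1 hc.2.1 hc.2.2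
        simp only [CombSurface.defect, if_pos hvb]
        omega
      · exact hsys v hv hvb
  have hsum : ∑ v ∈ D.verts, (if v ∈ corners then (2 : ℤ) else 0) ≤ 6 := by
    rw [← Finset.sum_filter, Finset.sum_const, nsmul_eq_mul, Finset.filter_mem_eq_inter]
    have : #(D.verts ∩ corners) ≤ 3 :=
      (Finset.card_le_card Finset.inter_subset_right).trans Finset.card_le_three
    omega
  have hnonneg : ∀ v ∈ D.verts, 0 ≤ D.defect v := fun v hv => by
    rw [D.defect_eq_of_sum_le_six heuler hle hsum v hv]
    positivity
  refine ⟨fun v hv hvb => le_antisymm (hsys v hv hvb) (hnonneg v hv),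
    fun v hv _ => (hnonneg v hv).trans' (by norm_num), ?_⟩
  intro n g hg i _ _ _ hneg _
  exact absurd hneg (not_lt.2 (hnonneg _ (CombSurface.IsBoundary.mem_verts
    ⟨_, hg.2.1 i, Finset.mem_insert_self _ _⟩)))

/-- a systolic disc whose boundary is a geodesic triangle (three
distinguished vertices of defect at most 2, all other boundary vertices in at
least 3 triangles) has all interior defects equal to 0 and is flat. -/
theorem stmt9_triangle_disc_flat {W : Type} [DecidableEq W]
    (D : CombSurface W) (hdisc : D.IsDisc)
    (hsys : ∀ v ∈ D.verts, ¬D.IsBoundary v → D.defect v ≤ 0)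
    (A B C : W) (hA : A ∈ D.verts) (hB : B ∈ D.verts) (hC : C ∈ D.verts)
    (hAB : A ≠ B) (hAC : A ≠ C) (hBC : B ≠ C)
    (hAbd : D.IsBoundary A) (hBbd : D.IsBoundary B) (hCbd : D.IsBoundary C)
    (hdA : D.defect A ≤ 2) (hdB : D.defect B ≤ 2) (hdC : D.defect C ≤ 2)
    (hbd : ∀ v ∈ D.verts, D.IsBoundary v → v ≠ A → v ≠ B → v ≠ C → 3 ≤ D.numTri v) :
    (∀ v ∈ D.verts, ¬D.IsBoundary v → D.defect v = 0) ∧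
    (∀ v ∈ D.verts, D.IsBoundary v → -1 ≤ D.defect v) ∧
    (∀ (n : ℕ) (g : ZMod n → W), D.BCycle n g →
      ∀ (i : ZMod n) (m : ℕ), 0 < m → m < n →
        D.defect (g i) < 0 → D.defect (g (i + (m : ZMod n))) < 0 →
        ∃ k : ℕ, 0 < k ∧ k < m ∧ 0 < D.defect (g (i + (k : ZMod n)))) :=
  stmt9_triangle_disc_flat_general D hdisc hsys A B C hdA hdB hdC hbd
end
end
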